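/- Let G be a finitely generated group with a normal abelian subgroup N such that G/N can be generated by r elements and N/C_N(x) has rank at most r for every x ∈ G. Then [N,G] has rank at most r². -/

import Mathlib

/-- A group has rank at most `r` if every finitely generated subgroup can be
generated by at most `r` elements. -/
def HasRankLE (G : Type*) [Group G] (r : ℕ) : Prop :=
  ∀ H : Subgroup G, H.FG → ∃ S : Finset G, S.card ≤ r ∧ Subgroup.closure (S : Set G) = H

/-!
Lift generators of `G ⧸ N` to `x₁, …, x_k ∈ G` with `k ≤ r`. As `N` is abelian, `n ↦ ⁅n, xᵢ⁆` is
an endomorphism of `N` whose kernel contains `C_N(xᵢ)`, so its image `[N, xᵢ]` is a quotient of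
`N ⧸ C_N(xᵢ)` and has rank at most `r`. The elements `g` with `⁅n, g⁆ ∈ ∏ᵢ [N, xᵢ]` for all `n ∈ N`
form a subgroup containing `N` and every `xᵢ`, hence `[N, G] = ∏ᵢ [N, xᵢ]`. Each generator of a
finitely generated subgroup `H` of this product splits into components in the factors, and these
components generate, factor by factor, subgroups with at most `r` generators each; so `H` lies in
a subgroup generated by `k r ≤ r²` elements. Finally, in an abelian group a subgroup of an
`m`-generated subgroup is `m`-generated, because submodules of `ℤᵐ` are free of rank at most `m`.
-/

open scoped commutatorElement IsMulCommutative

theorem Submodule.exists_finset_card_le_span_eq_of_le_span {R M : Type*} [CommRing R]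
    [IsDomain R] [IsPrincipalIdealRing R] [AddCommGroup M] [Module R M] {T : Finset M}
    {p : Submodule R M} (hp : p ≤ span R T) :
    ∃ S : Finset M, S.card ≤ T.card ∧ span R (S : Set M) = p := by
  classical
  let π : (T → R) →ₗ[R] M := Fintype.linearCombination R (fun t : T => (t : M))
  have hπ : LinearMap.range π = span R T := by
    simp [π, Fintype.range_linearCombination]
  let P := p.comap π
  obtain ⟨m, b⟩ := P.basisOfPid (Pi.basisFun R T)
  have hm : m ≤ T.card := by
    simpa using (Pi.basisFun R T).card_le_card_of_submodule P b
  refine ⟨Finset.univ.image fun i => π (b i), Finset.card_image_le.trans (by simpa using hm), ?_⟩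
  have hb : span R (Set.range fun i => P.subtype (b i)) = P := by
    rw [Set.range_comp' P.subtype, ← Submodule.map_span, b.span_eq, Submodule.map_top,
      Submodule.range_subtype]
  rw [Finset.coe_image, Finset.coe_univ, Set.image_univ]
  change span R (Set.range fun i => π (P.subtype (b i))) = p
  rw [Set.range_comp' π, ← Submodule.map_span, hb, Submodule.map_comap_eq, hπ, inf_eq_right.2 hp]

theorem Subgroup.exists_finset_card_le_closure_eq_of_le_closure {C : Type*} [CommGroup C]
    {T : Finset C} {H : Subgroup C} (hH : H ≤ Subgroup.closure (T : Set C)) :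
    ∃ S : Finset C, S.card ≤ T.card ∧ Subgroup.closure (S : Set C) = H := by
  have hclosure (S : Finset C) : (Subgroup.closure (S : Set C)).toAddSubgroup.toIntSubmodule =
      Submodule.span ℤ (S.map Additive.ofMul.toEmbedding : Set (Additive C)) := by
    rw [Subgroup.toAddSubgroup_closure, AddSubgroup.toIntSubmodule_closure]
    congr 1
    ext
    simp
  obtain ⟨S, hS, hSH⟩ := Submodule.exists_finset_card_le_span_eq_of_le_span
    (p := H.toAddSubgroup.toIntSubmodule) (T := T.map Additive.ofMul.toEmbedding)
    (by rw [← hclosure]; exact hH)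
  refine ⟨S.map Additive.toMul.toEmbedding, by simpa using hS, ?_⟩
  apply Subgroup.toAddSubgroup.injective
  apply AddSubgroup.toIntSubmodule.injective
  rw [hclosure, ← hSH]
  congr 1
  ext
  simp

namespace Subgroup

variable {G : Type*} [Group G]

/-- `HasRankLE` for a subgroup, with the generators taken in the ambient group. -/
def RankLE (K : Subgroup G) (r : ℕ) : Prop :=
  ∀ H ≤ K, H.FG → ∃ S : Finset G, S.card ≤ r ∧ closure (S : Set G) = H

theorem RankLE.mono {K L : Subgroup G} {r s : ℕ} (hL : L.RankLE r) (hKL : K ≤ L) (hrs : r ≤ s) :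
    K.RankLE s := fun H hHK hH =>
  (hL H (hHK.trans hKL) hH).imp fun _ hS => ⟨hS.1.trans hrs, hS.2⟩

theorem RankLE.iSup {C : Type*} [CommGroup C] {ι : Type*} [Fintype ι] {D : ι → Subgroup C}
    {r : ι → ℕ} (hD : ∀ i, (D i).RankLE (r i)) : (⨆ i, D i).RankLE (∑ i, r i) := by
  classical
  rintro H hH ⟨T, rfl⟩
  have hcomm : Pairwise fun i j => ∀ x y : C, x ∈ D i → y ∈ D j → Commute x y :=
    fun _ _ _ x y _ _ => Commute.all x y
  have hdecomp : ∀ t ∈ T, ∃ d : ∀ i, D i, t = ∏ i, (d i : C) := by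
    intro t ht
    obtain ⟨d, hd⟩ := (noncommPiCoprod_range (hcomm := hcomm)).ge (hH (subset_closure ht))
    exact ⟨d, by rw [← hd, noncommPiCoprod_apply, Finset.noncommProd_eq_prod]⟩
  choose d hd using hdecomp
  have hcomponents : ∀ i, ∃ S : Finset C, S.card ≤ r i ∧
      closure (S : Set C) = closure (Set.range fun t : T => (d t t.2 i : C)) := by
    refine fun i => hD i _ ?_ ((fg_iff _).2 ⟨_, rfl, Set.finite_range _⟩)
    exact (closure_le _).2 (Set.range_subset_iff.2 fun t => (d t t.2 i).2)
  choose S hS hSd using hcomponents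
  obtain ⟨S', hS', hS'T⟩ := exists_finset_card_le_closure_eq_of_le_closure
    (T := Finset.univ.biUnion S) (H := closure T) <| by
    refine (closure_le _).2 fun t ht => (hd t ht).symm ▸ prod_mem fun i _ => ?_
    have hdi : (d t ht i : C) ∈ closure (S i) := hSd i ▸ subset_closure ⟨⟨t, ht⟩, rfl⟩
    exact closure_mono (Finset.coe_subset.2 (Finset.subset_biUnion_of_mem S (Finset.mem_univ i)))
      hdi
  exact ⟨S', hS'.trans (Finset.card_biUnion_le.trans (Finset.sum_le_sum fun i _ => hS i)), hS'T⟩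

end Subgroup

section HasRankLE

variable {K L : Type*} [Group K] [Group L] {r : ℕ}

theorem HasRankLE.rankLE_range (hK : HasRankLE K r) (f : K →* L) : f.range.RankLE r := by
  classical
  rintro F hF ⟨T, rfl⟩
  obtain ⟨U, hUT⟩ : ∃ U : Finset K, U.image f = T := by
    obtain ⟨U, -, hU⟩ := Finset.subset_set_image_iff.1
      (show (T : Set L) ⊆ f '' Set.univ from fun t ht => by
        simpa using hF (Subgroup.subset_closure ht))
    exact ⟨U, hU⟩
  obtain ⟨S, hS, hSU⟩ := hK (Subgroup.closure U) ⟨U, rfl⟩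
  refine ⟨S.image f, Finset.card_image_le.trans hS, ?_⟩
  rw [Finset.coe_image, ← MonoidHom.map_closure, hSU, MonoidHom.map_closure, ← Finset.coe_image,
    hUT]

theorem hasRankLE_of_rankLE_range {f : K →* L} (hf : Function.Injective f) (h : f.range.RankLE r) :
    HasRankLE K r := by
  classical
  rintro H ⟨T, rfl⟩
  obtain ⟨S, hS, hST⟩ := h _ (Subgroup.map_le_range f _)
    ⟨T.image f, by rw [Finset.coe_image, MonoidHom.map_closure]⟩
  have hSf : (S : Set L) ⊆ Set.range f := fun s hs =>
    Subgroup.map_le_range f _ (hST ▸ Subgroup.subset_closure hs)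
  refine ⟨S.preimage f hf.injOn, ?_, ?_⟩
  · exact (Finset.card_le_card_of_injOn f (fun k hk => Finset.mem_preimage.1 hk) hf.injOn).trans hS
  · apply Subgroup.map_injective hf
    rw [MonoidHom.map_closure, Finset.coe_preimage, Set.image_preimage_eq_of_subset hSf, hST]

end HasRankLE

namespace Subgroup

variable {G : Type*} [Group G]

theorem exists_finset_card_le_sup_closure_eq_top {N : Subgroup G} [N.Normal] {r : ℕ}
    (h : ∃ S : Finset (G ⧸ N), S.card ≤ r ∧ closure (S : Set (G ⧸ N)) = ⊤) :
    ∃ s : Finset G, s.card ≤ r ∧ N ⊔ closure (s : Set G) = ⊤ := by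
  classical
  obtain ⟨S, hS, hStop⟩ := h
  refine ⟨S.image Quotient.out, Finset.card_image_le.trans hS, ?_⟩
  have hmk : QuotientGroup.mk' N '' (S.image Quotient.out : Set G) = S := by
    simp [Set.image_image]
  rw [← QuotientGroup.comap_map_mk', MonoidHom.map_closure, hmk, hStop, comap_top]

theorem commutatorElement_mem_of_mem_left {N : Subgroup G} [N.Normal] {n : G} (hn : n ∈ N)
    (g : G) : ⁅n, g⁆ ∈ N :=
  commutator_le_left N ⊤ (commutator_mem_commutator hn (mem_top g))

def centralizerMod (N M : Subgroup G) [N.Normal] : Subgroup G where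
  carrier := {g | ∀ n ∈ N, ⁅n, g⁆ ∈ M}
  one_mem' n _ := by simp [M.one_mem]
  mul_mem' {g h} hg hh n hn := by
    rw [show ⁅n, g * h⁆ = ⁅n, g⁆ * (⁅⁅n, h⁆, g⁆⁻¹ * ⁅n, h⁆) by group]
    exact M.mul_mem (hg n hn)
      (M.mul_mem (M.inv_mem (hg _ (commutatorElement_mem_of_mem_left hn h))) (hh n hn))
  inv_mem' {g} hg n hn := by
    rw [show ⁅n, g⁻¹⁆ = ⁅g⁻¹ * n * g, g⁆⁻¹ by group]
    exact M.inv_mem (hg _ (by simpa using ‹N.Normal›.conj_mem n hn g⁻¹))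

theorem commutator_top_le_of_sup_closure_eq_top {N M : Subgroup G} [N.Normal] {s : Set G}
    (hs : N ⊔ closure s = ⊤) (hN : ∀ n ∈ N, ∀ m ∈ N, ⁅n, m⁆ ∈ M)
    (hsM : ∀ x ∈ s, ∀ n ∈ N, ⁅n, x⁆ ∈ M) : ⁅N, ⊤⁆ ≤ M := by
  have htop : ⊤ ≤ centralizerMod N M :=
    hs ▸ sup_le (fun m hm n hn => hN n hn m hm) ((closure_le _).2 fun x hx n hn => hsM x hx n hn)
  rw [commutator_le]
  exact fun n hn g _ => htop (mem_top g) n hn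

variable (N : Subgroup G) [N.Normal] [IsMulCommutative N]

def commutatorHom (x : G) : N →* N where
  toFun n := ⟨⁅(n : G), x⁆, commutatorElement_mem_of_mem_left n.2 x⟩
  map_one' := by ext; simp
  map_mul' n m := by
    have hmx := commutatorElement_mem_of_mem_left m.2 x
    have hnx := commutatorElement_mem_of_mem_left n.2 x
    ext
    calc ⁅(n : G) * m, x⁆ = n * ⁅(m : G), x⁆ * (n : G)⁻¹ * ⁅(n : G), x⁆ := by group
      _ = ⁅(m : G), x⁆ * ⁅(n : G), x⁆ := by
        rw [setLike_mul_comm n.2 hmx]; group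
      _ = ⁅(n : G), x⁆ * ⁅(m : G), x⁆ := setLike_mul_comm hmx hnx

theorem centralizer_subgroupOf_le_ker_commutatorHom (x : G) :
    (centralizer {x}).subgroupOf N ≤ (commutatorHom N x).ker := fun c hc => by
  ext
  exact commutatorElement_eq_one_iff_mul_comm.2
    (mem_centralizer_singleton_iff.1 (mem_subgroupOf.1 hc))

theorem rankLE_range_commutatorHom {x : G} {r : ℕ}
    (h : HasRankLE (N ⧸ (centralizer {x}).subgroupOf N) r) : (commutatorHom N x).range.RankLE r :=
  (h.rankLE_range (QuotientGroup.lift _ _ (centralizer_subgroupOf_le_ker_commutatorHom N x))).mono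
    (fun _ ⟨n, hn⟩ => ⟨n, hn⟩) le_rfl

end Subgroup

open Subgroup in
theorem rank_commutator_le_sq_of_fg_general
    (G : Type*) [Group G]
    (N : Subgroup G) [N.Normal] [IsMulCommutative N] (r : ℕ)
    (hquot : ∃ S : Finset (G ⧸ N), S.card ≤ r ∧ Subgroup.closure (S : Set (G ⧸ N)) = ⊤)
    (hcent : ∀ x : G,
      HasRankLE (N ⧸ (Subgroup.centralizer {x}).subgroupOf N) r) :
    HasRankLE (⁅N, (⊤ : Subgroup G)⁆ : Subgroup G) (r ^ 2) := by
  obtain ⟨s, hs, hsN⟩ := exists_finset_card_le_sup_closure_eq_top hquot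
  let J : Subgroup N := ⨆ x : s, (commutatorHom N x).range
  have hJ : J.RankLE (r ^ 2) :=
    (RankLE.iSup fun x : s => rankLE_range_commutatorHom N (hcent x)).mono le_rfl
      (by simpa [sq] using Nat.mul_le_mul_right r hs)
  have hNJ : ⁅N, ⊤⁆ ≤ J.map N.subtype := by
    refine commutator_top_le_of_sup_closure_eq_top hsN (fun n hn m hm => ?_) fun x hx n hn =>
      ⟨_, mem_iSup_of_mem ⟨x, hx⟩ ⟨⟨n, hn⟩, rfl⟩, rfl⟩
    rw [commutatorElement_eq_one_iff_mul_comm.2 (setLike_mul_comm hn hm)]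
    exact one_mem _
  refine hasRankLE_of_rankLE_range (inclusion_injective (commutator_le_left N ⊤))
    (hJ.mono ?_ le_rfl)
  rw [inclusion_range]
  exact (comap_mono hNJ).trans (comap_map_eq_self_of_injective N.subtype_injective J).le

/-- Let `G` be a finitely generated group with a normal abelian subgroup
`N` such that `G/N` can be generated by `r` elements and `N/C_N(x)` has rank at most
`r` for every `x ∈ G`. Then `[N,G]` has rank at most `r²`. -/
theorem rank_commutator_le_sq_of_fg
    (G : Type*) [Group G] [Group.FG G]
    (N : Subgroup G) [N.Normal] [IsMulCommutative N] (r : ℕ)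
    (hquot : ∃ S : Finset (G ⧸ N), S.card ≤ r ∧ Subgroup.closure (S : Set (G ⧸ N)) = ⊤)
    (hcent : ∀ x : G,
      HasRankLE (N ⧸ (Subgroup.centralizer {x}).subgroupOf N) r) :
    HasRankLE (⁅N, (⊤ : Subgroup G)⁆ : Subgroup G) (r ^ 2) :=
  rank_commutator_le_sq_of_fg_general G N r hquot hcent
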